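/- arXiv:2403.20161 — 2 statements merged into one kernel-verified Lean document; each statement's English description precedes it below -/
import Mathlib

section
/- Let G be an RCGBAR with independent objectives. For every kind of preferences pref ∈ {ct, ca, pca}, a profile P is a Nash equilibrium (P ∈ NE^pref(G)) if and only if for every player i ∈ N: P_i equals the bag of singleton bundles consisting exactly of the atoms of γ_i when ♭(γ_i) ⊆ ♭•(ε_i), and P_i = ∅ otherwise. In particular such a game has exactly one Nash equilibrium for each kind of preferences. -/
open scoped Classical

/-- A resource contribution game over atomic resource type `Res` with player set `ι`:
each player has a goal (a resource bundle, i.e. a multiset of atomic resources) and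
an endowment (a resource bag, i.e. a multiset of resource bundles). -/
structure RCG (Res ι : Type*) where
  goal : ι → Multiset Res
  endow : ι → Multiset (Multiset Res)

namespace RCG

variable {Res ι : Type*} [Fintype ι]

/-- A profile assigns to each player a bag (his contribution). -/
abbrev Profile (Res ι : Type*) := ι → Multiset (Multiset Res)

/-- Outcome of a profile: the multiset sum of all contributions. -/
def out (P : Profile Res ι) : Multiset (Multiset Res) := ∑ i, P i

/-- The bag `X` can be transformed into the bundle `B`: `♭(B) ⊆ ♭•(X)`. -/
def Trans (X : Multiset (Multiset Res)) (B : Multiset Res) : Prop := B ≤ X.sum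

/-- Player `i` is potentially satisfied by profile `P`. -/
def Psat (G : RCG Res ι) (P : Profile Res ι) (i : ι) : Prop :=
  Trans (out P) (G.goal i)

/-- The set of players potentially satisfied by `P`. -/
noncomputable def psatPlayers (G : RCG Res ι) (P : Profile Res ι) : Finset ι :=
  Finset.univ.filter fun i => Psat G P i

/-- The profile `P` is contentious. -/
def Contentious (G : RCG Res ι) (P : Profile Res ι) : Prop :=
  ¬ Trans (out P) (∑ j ∈ psatPlayers G P, G.goal j)

/-- Restriction of bundle `B` to the resource types occurring in `C`. -/
noncomputable def restr (B C : Multiset Res) : Multiset Res := B.filter (· ∈ C)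

/-- The profile `P` is contentious for player `i`. -/
def ContentiousFor (G : RCG Res ι) (P : Profile Res ι) (i : ι) : Prop :=
  Psat G P i ∧ ¬ Trans (out P) (∑ j ∈ psatPlayers G P, restr (G.goal j) (G.goal i))

/-- The three kinds of preferences: contention-tolerant, (public) contention-averse,
private contention-averse. -/
inductive Pref | ct | ca | pca

/-- `P` is a good profile for player `i` according to preference kind `pref`. -/
def Good (pref : Pref) (G : RCG Res ι) (P : Profile Res ι) (i : ι) : Prop :=
  match pref with
  | .ct => Psat G P i
  | .ca => Psat G P i ∧ ¬ Contentious G P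
  | .pca => Psat G P i ∧ ¬ ContentiousFor G P i

/-- Player `i` strictly prefers `P` over `Q` (i.e. `Q ≺^pref_i P`). -/
def Prefers (pref : Pref) (G : RCG Res ι) (i : ι) (Q P : Profile Res ι) : Prop :=
  (¬ Good pref G P i ∧ ¬ Good pref G Q i ∧ P i < Q i) ∨
  (Good pref G P i ∧ ¬ Good pref G Q i) ∨
  (Good pref G P i ∧ Good pref G Q i ∧ P i < Q i)

/-- `C` is a profitable deviation for player `i` from profile `P`. -/
noncomputable def ProfDev (pref : Pref) (G : RCG Res ι) (P : Profile Res ι) (i : ι)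
    (C : Multiset (Multiset Res)) : Prop :=
  C ≤ G.endow i ∧ Prefers pref G i P (Function.update P i C)

/-- `P` is a pure Nash equilibrium of `G` according to `pref`:
`P` is a profile of `G` and no player has a profitable deviation. -/
noncomputable def NE (pref : Pref) (G : RCG Res ι) (P : Profile Res ι) : Prop :=
  (∀ i, P i ≤ G.endow i) ∧ ∀ i C, ¬ ProfDev pref G P i C

/-- `G` is an RCG with endowments as bags of atomic resources. -/
def IsRCGBAR (G : RCG Res ι) : Prop :=
  ∀ i, ∀ B ∈ G.endow i, ∃ r : Res, B = {r}

/-- `G` has independent objectives. -/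
def IndepObjectives (G : RCG Res ι) : Prop :=
  ∀ i j : ι, i ≠ j → ∀ r : Res, r ∈ G.goal i → r ∉ G.goal j

end RCG

/-!
Independent objectives make every profile free of contention, so all three kinds of preferences
coincide with contention tolerance, and whether a player is potentially satisfied depends only on
the atoms of his own goal in the outcome. In an equilibrium a player who is not potentially
satisfied contributes nothing, and one who is cannot drop a single atom without losing his goal.
Hence every contribution consists of atoms of the contributor's own goal, so a potentially
satisfied player must supply his whole goal himself and nothing more. Conversely, in the profile
where every player supplies his goal when his endowment covers it, any deviation either loses the
goal or still has to contain all of its atoms.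
-/

namespace Multiset

variable {α : Type*}

theorem sum_le_sum_of_le {M : Type*} [AddCommMonoid M] [PartialOrder M] [CanonicallyOrderedAdd M]
    {s t : Multiset M} (h : s ≤ t) : s.sum ≤ t.sum := by
  obtain ⟨u, rfl⟩ := exists_add_of_le h
  simp

theorem map_singleton_sum {X : Multiset (Multiset α)} (hX : ∀ B ∈ X, ∃ a, B = {a}) :
    X.sum.map (fun a => {a}) = X := by
  induction X using Multiset.induction with
  | empty => simp
  | cons B X ih =>
    obtain ⟨a, rfl⟩ := hX B (mem_cons_self B X)
    simp [ih fun B hB => hX B (mem_cons_of_mem hB)]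

theorem map_singleton_le_of_le_sum {X : Multiset (Multiset α)} (hX : ∀ B ∈ X, ∃ a, B = {a})
    {s : Multiset α} (h : s ≤ X.sum) : s.map (fun a => {a}) ≤ X :=
  map_singleton_sum hX ▸ map_le_map h

theorem not_lt_map_singleton_of_le_sum {X : Multiset (Multiset α)}
    (hX : ∀ B ∈ X, ∃ a, B = {a}) {s : Multiset α} (h : s ≤ X.sum) :
    ¬ X < s.map (fun a => {a}) := by
  intro hlt
  have hcard : card X.sum = card X := by
    conv_rhs => rw [← map_singleton_sum hX]
    rw [card_map]
  have h₁ := card_le_card h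
  have h₂ := card_lt_card hlt
  rw [card_map] at h₂
  omega

theorem count_eq_count_add_one_of_le_cons_of_not_le [DecidableEq α] {B T : Multiset α} {a : α}
    (h : B ≤ a ::ₘ T) (h' : ¬ B ≤ T) : count a B = count a T + 1 := by
  obtain ⟨b, hb⟩ : ∃ b, count b T < count b B := by simpa [le_iff_count] using h'
  have hB := le_iff_count.mp h b
  obtain rfl : b = a := by
    by_contra hba
    rw [count_cons_of_ne hba] at hB
    omega
  rw [count_cons_self] at hB
  omega

end Multiset

namespace RCG

open Multiset Function

variable {Res ι : Type*} {G : RCG Res ι} {P : Profile Res ι} {i : ι}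
  {C : Multiset (Multiset Res)} {pref : Pref}

theorem IsRCGBAR.forall_eq_singleton_of_le (hbar : IsRCGBAR G) (hC : C ≤ G.endow i) :
    ∀ B ∈ C, ∃ r, B = {r} :=
  fun B hB => hbar i B (mem_of_le hC hB)

theorem IndepObjectives.sum_goal_eq_sup (hind : IndepObjectives G) (s : Finset ι) :
    ∑ j ∈ s, G.goal j = s.sup G.goal :=
  finsetSum_eq_sup_iff_disjoint.2 fun j _ k _ hjk =>
    Multiset.disjoint_left.2 fun hr => hind j k hjk _ hr

noncomputable def selfSupply (G : RCG Res ι) : Profile Res ι := fun i =>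
  if G.goal i ≤ (G.endow i).sum then (G.goal i).map fun a => {a} else 0

theorem selfSupply_of_le (h : G.goal i ≤ (G.endow i).sum) :
    selfSupply G i = (G.goal i).map fun a => {a} :=
  if_pos h

theorem selfSupply_of_not_le (h : ¬ G.goal i ≤ (G.endow i).sum) : selfSupply G i = 0 :=
  if_neg h

theorem eq_selfSupply_iff :
    P = selfSupply G ↔
      ∀ i, (G.goal i ≤ (G.endow i).sum → P i = (G.goal i).map fun a => {a}) ∧
        (¬ G.goal i ≤ (G.endow i).sum → P i = 0) := by
  refine funext_iff.trans (forall_congr' fun i => ?_)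
  by_cases hcov : G.goal i ≤ (G.endow i).sum
  · simp [selfSupply_of_le hcov, hcov]
  · simp [selfSupply_of_not_le hcov, hcov]

theorem sum_selfSupply_le : (selfSupply G i).sum ≤ G.goal i := by
  unfold selfSupply
  split_ifs <;> simp

variable [Fintype ι]

theorem sum_le_out_sum (P : Profile Res ι) (i : ι) : (P i).sum ≤ (out P).sum := by
  rw [out, Multiset.sum_sum]
  exact Finset.single_le_sum_of_canonicallyOrdered (f := fun j => (P j).sum) (Finset.mem_univ i)

theorem out_update_add (P : Profile Res ι) (i : ι) (C : Multiset (Multiset Res)) :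
    out (update P i C) + P i = out P + C := by
  rw [out, out, Finset.sum_update_of_mem (Finset.mem_univ i),
    ← Finset.add_sum_erase _ _ (Finset.mem_univ i), Finset.sdiff_singleton_eq_erase]
  abel

theorem psat_update_of_le_sum (h : G.goal i ≤ C.sum) : Psat G (update P i C) i :=
  h.trans (by simpa using sum_le_out_sum (update P i C) i)

theorem contentious_of_contentiousFor (h : ContentiousFor G P i) : Contentious G P :=
  fun hc => h.2 <| (Finset.sum_le_sum fun _ _ => filter_le _ _).trans hc

theorem IndepObjectives.not_contentious (hind : IndepObjectives G) (P : Profile Res ι) :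
    ¬ Contentious G P := by
  rw [Contentious, not_not, Trans, hind.sum_goal_eq_sup]
  exact Finset.sup_le fun j hj => (Finset.mem_filter.1 hj).2

theorem IndepObjectives.good_iff_psat (hind : IndepObjectives G) :
    Good pref G P i ↔ Psat G P i := by
  cases pref with
  | ct => rfl
  | ca => exact and_iff_left (hind.not_contentious P)
  | pca => exact and_iff_left fun h => hind.not_contentious P (contentious_of_contentiousFor h)

theorem IndepObjectives.ne_iff_ne_ct (hind : IndepObjectives G) :
    NE pref G P ↔ NE .ct G P := by
  simp only [NE, ProfDev, Prefers, hind.good_iff_psat]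

theorem IndepObjectives.psat_iff_goal_le_sum (hind : IndepObjectives G)
    (hown : ∀ j ≠ i, ∀ r ∈ (P j).sum, r ∈ G.goal j) :
    Psat G P i ↔ G.goal i ≤ (P i).sum := by
  refine ⟨fun h => le_iff_count.2 fun r => ?_, fun h => h.trans (sum_le_out_sum P i)⟩
  by_cases hr : r ∈ G.goal i
  · have hcount : count r (out P).sum = count r (P i).sum := by
      rw [out, Multiset.sum_sum, count_sum',
        Finset.sum_eq_single_of_mem i (Finset.mem_univ i) fun j _ hji =>
          count_eq_zero.2 fun hrj => hind i j hji.symm r hr (hown j hji r hrj)]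
    exact hcount ▸ count_le_of_le r h
  · simp [count_eq_zero.2 hr]

theorem NE.eq_zero_of_not_good (h : NE pref G P) (hi : ¬ Good pref G P i) : P i = 0 := by
  by_contra hne
  refine h.2 i 0 ⟨zero_le _, ?_⟩
  by_cases hg : Good pref G (update P i 0) i
  · exact Or.inr (Or.inl ⟨hg, hi⟩)
  · exact Or.inl ⟨hg, hi, by simpa [pos_iff_ne_zero] using hne⟩

theorem NE.not_good_update_of_lt (h : NE pref G P) (hi : Good pref G P i) (hC : C < P i) :
    ¬ Good pref G (update P i C) i := fun hg =>
  h.2 i C ⟨hC.le.trans (h.1 i), Or.inr (Or.inr ⟨hg, hi, by rwa [update_self]⟩)⟩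

theorem NE.good_of_good_update (h : NE pref G P) (hC : C ≤ G.endow i)
    (hg : Good pref G (update P i C) i) : Good pref G P i :=
  by_contra fun hi => h.2 i C ⟨hC, Or.inr (Or.inl ⟨hg, hi⟩)⟩

theorem NE.count_out_sum_eq (hbar : IsRCGBAR G) (h : NE .ct G P) (hi : Psat G P i) {r : Res}
    (hr : r ∈ (P i).sum) : count r (out P).sum = count r (G.goal i) := by
  have hmem : {r} ∈ P i := by
    rw [← map_singleton_sum (hbar.forall_eq_singleton_of_le (h.1 i))]
    exact mem_map_of_mem _ hr
  set C := (P i).erase {r}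
  have hloss : ¬ Psat G (update P i C) i := h.not_good_update_of_lt hi (erase_lt.2 hmem)
  have hout : (out P).sum = r ::ₘ (out (update P i C)).sum := by
    have hadd := congrArg Multiset.sum (out_update_add P i C)
    rw [← cons_erase hmem, sum_add, sum_add, sum_cons, ← add_assoc, add_left_inj] at hadd
    rw [← hadd, add_comm, singleton_add]
  rw [hout, count_cons_self,
    count_eq_count_add_one_of_le_cons_of_not_le (hout ▸ hi : G.goal i ≤ _) hloss]

theorem NE.mem_goal_of_mem_sum (hbar : IsRCGBAR G) (h : NE .ct G P) {r : Res}
    (hr : r ∈ (P i).sum) : r ∈ G.goal i := by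
  by_cases hi : Psat G P i
  · rw [← count_pos, ← h.count_out_sum_eq hbar hi hr]
    exact count_pos.2 (mem_of_le (sum_le_out_sum P i) hr)
  · rw [h.eq_zero_of_not_good hi] at hr
    simp at hr

theorem NE.sum_eq_goal (hbar : IsRCGBAR G) (hind : IndepObjectives G) (h : NE .ct G P)
    (hi : Psat G P i) : (P i).sum = G.goal i := by
  refine le_antisymm (le_iff_count.2 fun r => ?_)
    ((hind.psat_iff_goal_le_sum fun _ _ _ hr => h.mem_goal_of_mem_sum hbar hr).1 hi)
  by_cases hr : r ∈ (P i).sum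
  · exact h.count_out_sum_eq hbar hi hr ▸ count_le_of_le r (sum_le_out_sum P i)
  · simp [count_eq_zero.2 hr]

theorem NE.psat_of_goal_le (hbar : IsRCGBAR G) (h : NE .ct G P)
    (hcov : G.goal i ≤ (G.endow i).sum) : Psat G P i :=
  h.good_of_good_update (map_singleton_le_of_le_sum (hbar i) hcov)
    (psat_update_of_le_sum (sum_map_singleton _).ge)

theorem NE.eq_selfSupply (hbar : IsRCGBAR G) (hind : IndepObjectives G) (h : NE .ct G P) :
    P = selfSupply G := by
  funext i
  by_cases hcov : G.goal i ≤ (G.endow i).sum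
  · rw [selfSupply_of_le hcov, ← h.sum_eq_goal hbar hind (h.psat_of_goal_le hbar hcov),
      map_singleton_sum (hbar.forall_eq_singleton_of_le (h.1 i))]
  · rw [selfSupply_of_not_le hcov]
    exact h.eq_zero_of_not_good fun hi =>
      hcov (h.sum_eq_goal hbar hind hi ▸ sum_le_sum_of_le (h.1 i))

theorem IndepObjectives.psat_update_selfSupply_iff (hind : IndepObjectives G) :
    Psat G (update (selfSupply G) i C) i ↔ G.goal i ≤ C.sum := by
  have hown : ∀ j ≠ i, ∀ r ∈ (update (selfSupply G) i C j).sum, r ∈ G.goal j :=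
    fun j hj _ hr => mem_of_le sum_selfSupply_le (update_of_ne hj C (selfSupply G) ▸ hr)
  rw [hind.psat_iff_goal_le_sum hown, update_self]

theorem ne_selfSupply (hbar : IsRCGBAR G) (hind : IndepObjectives G) :
    NE .ct G (selfSupply G) := by
  refine ⟨fun i => ?_, fun i C ⟨hCe, hpref⟩ => ?_⟩
  · by_cases hcov : G.goal i ≤ (G.endow i).sum
    · rw [selfSupply_of_le hcov]
      exact map_singleton_le_of_le_sum (hbar i) hcov
    · rw [selfSupply_of_not_le hcov]
      exact zero_le _
  have hdev := (hind.psat_update_selfSupply_iff (i := i) (C := C)).1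
  by_cases hcov : G.goal i ≤ (G.endow i).sum
  · have hPi := selfSupply_of_le hcov
    have hi : Psat G (selfSupply G) i := by
      refine le_trans ?_ (sum_le_out_sum _ i)
      rw [hPi, sum_map_singleton]
    rcases hpref with ⟨-, hi', -⟩ | ⟨-, hi'⟩ | ⟨hq, -, hlt⟩
    · exact hi' hi
    · exact hi' hi
    · rw [update_self, hPi] at hlt
      exact not_lt_map_singleton_of_le_sum (hbar.forall_eq_singleton_of_le hCe) (hdev hq) hlt
  · have hPi := selfSupply_of_not_le hcov
    rcases hpref with ⟨-, -, hlt⟩ | ⟨hq, -⟩ | ⟨-, -, hlt⟩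
    · rw [update_self, hPi] at hlt
      exact not_lt_zero hlt
    · exact hcov ((hdev hq).trans (sum_le_sum_of_le hCe))
    · rw [update_self, hPi] at hlt
      exact not_lt_zero hlt

theorem ne_iff_eq_selfSupply (hbar : IsRCGBAR G) (hind : IndepObjectives G) :
    NE pref G P ↔ P = selfSupply G := by
  rw [hind.ne_iff_ne_ct]
  exact ⟨fun h => h.eq_selfSupply hbar hind, fun h => h ▸ ne_selfSupply hbar hind⟩

end RCG

/-- in an RCGBAR with independent objectives, for every kind of
preferences, `P` is a Nash equilibrium iff each player contributes exactly the atoms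
of his goal (as singleton bundles) when his endowment covers his goal, and nothing
otherwise; in particular there is exactly one Nash equilibrium. -/
theorem RCGBAR_indep_NE_characterization {Res ι : Type*} [Fintype ι]
    (G : RCG Res ι) (hbar : RCG.IsRCGBAR G) (hind : RCG.IndepObjectives G)
    (pref : RCG.Pref) :
    (∀ P : RCG.Profile Res ι,
      RCG.NE pref G P ↔
        ∀ i : ι,
          (G.goal i ≤ (G.endow i).sum →
            P i = (G.goal i).map (fun a => ({a} : Multiset Res))) ∧
          (¬ G.goal i ≤ (G.endow i).sum → P i = 0)) ∧
    (∃! P : RCG.Profile Res ι, RCG.NE pref G P) := by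
  have hNE (P : RCG.Profile Res ι) := RCG.ne_iff_eq_selfSupply (pref := pref) (P := P) hbar hind
  exact ⟨fun P => (hNE P).trans RCG.eq_selfSupply_iff,
    RCG.selfSupply G, (hNE _).2 rfl, fun P hP => (hNE P).1 hP⟩
end

section
/- In every resource contribution game with exactly two players, public contention and private contention coincide: for each player i, cont-prof(G,1) = cont-prof(G,2) = cont-prof(G) on profiles, hence good^ca(G,i) = good^pca(G,i) for both players, and consequently NE^ca(G) = NE^pca(G). -/
open scoped Classical

/-!
With two players, a contentious profile must potentially satisfy both of them, say with goals
`γᵢ` and `γⱼ`, both contained in the flattened outcome `M`. Private contention for `i` then asks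
whether `γᵢ + γⱼ|_{γᵢ} ≤ M`, and this is equivalent to `γᵢ + γⱼ ≤ M`: on resource types occurring
in `γᵢ` the two sides agree, and on the others only `γⱼ ≤ M` matters. Conversely, private
contention always implies public contention, since restricting goals only shrinks the demand.
Once the two contention notions agree, so do good profiles, preferences and Nash equilibria.
-/

namespace RCG

variable {Res ι : Type*}

theorem restr_self (B : Multiset Res) : restr B B = B :=
  Multiset.filter_eq_self.mpr fun _ h => h

theorem restr_le (B C : Multiset Res) : restr B C ≤ B :=
  Multiset.filter_le _ _

theorem add_restr_le_iff {A B M : Multiset Res} (hB : B ≤ M) :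
    A + restr B A ≤ M ↔ A + B ≤ M := by
  refine ⟨fun h => ?_, fun h => (add_le_add (le_refl A) (restr_le B A)).trans h⟩
  rw [Multiset.le_iff_count] at *
  intro r
  by_cases hr : r ∈ A
  · simpa [restr, Multiset.count_filter, hr] using h r
  · simpa [Multiset.count_eq_zero_of_notMem hr] using hB r

variable [Fintype ι] (G : RCG Res ι) (P : Profile Res ι)

theorem mem_psatPlayers {i : ι} : i ∈ psatPlayers G P ↔ Psat G P i := by
  simp [psatPlayers]

theorem ContentiousFor.contentious {i : ι} (h : ContentiousFor G P i) : Contentious G P :=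
  fun hsum => h.2 ((Finset.sum_le_sum fun _ _ => restr_le _ _).trans hsum)

theorem one_lt_card_psatPlayers (h : Contentious G P) : 1 < (psatPlayers G P).card := by
  by_contra! hcard
  apply h
  rcases (psatPlayers G P).eq_empty_or_nonempty with hempty | ⟨k, hk⟩
  · simp [hempty, Trans]
  · have hsingle : psatPlayers G P = {k} :=
      Finset.eq_singleton_iff_unique_mem.mpr
        ⟨hk, fun l hl => Finset.card_le_one.mp hcard l hl k hk⟩
    rw [hsingle, Finset.sum_singleton]
    exact (mem_psatPlayers G P).mp hk

theorem contentiousFor_iff_contentious {i j : ι} (hij : i ≠ j)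
    (hS : psatPlayers G P ⊆ {i, j}) : ContentiousFor G P i ↔ Contentious G P := by
  refine ⟨ContentiousFor.contentious G P, fun h => ?_⟩
  have hpair : psatPlayers G P = {i, j} := Finset.eq_of_subset_of_card_le hS
    (by rw [Finset.card_pair hij]; exact one_lt_card_psatPlayers G P h)
  have hi : Psat G P i := by simp [← mem_psatPlayers, hpair]
  have hj : Psat G P j := by simp [← mem_psatPlayers, hpair]
  refine ⟨hi, ?_⟩
  unfold Contentious Trans at h
  unfold Trans
  rw [hpair, Finset.sum_pair hij] at h ⊢
  rwa [restr_self, add_restr_le_iff hj]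

theorem contentiousFor_iff_contentious_of_two (G : RCG Res (Fin 2)) (P : Profile Res (Fin 2))
    (i : Fin 2) : ContentiousFor G P i ↔ Contentious G P := by
  obtain ⟨j, hij, hcover⟩ : ∃ j, i ≠ j ∧ ∀ k, k = i ∨ k = j := by
    fin_cases i
    exacts [⟨1, by decide, by decide⟩, ⟨0, by decide, by decide⟩]
  exact contentiousFor_iff_contentious G P hij fun k _ => by simpa using hcover k

theorem good_ca_iff_good_pca {i : ι} (h : ContentiousFor G P i ↔ Contentious G P) :
    Good .ca G P i ↔ Good .pca G P i := by
  simp only [Good, h]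

theorem ne_iff_ne_of_good_iff {pref pref' : Pref}
    (h : ∀ P i, Good pref G P i ↔ Good pref' G P i) : NE pref G P ↔ NE pref' G P := by
  have hprefers : ∀ i Q R, Prefers pref G i Q R ↔ Prefers pref' G i Q R := by
    intro i Q R
    simp only [Prefers, h]
  simp only [NE, ProfDev, hprefers]

end RCG

/-- in a two-player game, public and private contention coincide:
for each player, contention for that player coincides with contention, good profiles
for `ca` and `pca` coincide, and `NE^ca(G) = NE^pca(G)`. -/
theorem two_player_contention_coincide {Res : Type*} (G : RCG Res (Fin 2)) :
    (∀ P : RCG.Profile Res (Fin 2), (∀ i, P i ≤ G.endow i) →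
      (∀ i : Fin 2, RCG.ContentiousFor G P i ↔ RCG.Contentious G P) ∧
      (∀ i : Fin 2, RCG.Good .ca G P i ↔ RCG.Good .pca G P i)) ∧
    (∀ P : RCG.Profile Res (Fin 2), RCG.NE .ca G P ↔ RCG.NE .pca G P) := by
  have hcont := RCG.contentiousFor_iff_contentious_of_two G
  have hgood : ∀ P i, RCG.Good .ca G P i ↔ RCG.Good .pca G P i :=
    fun P i => RCG.good_ca_iff_good_pca G P (hcont P i)
  exact ⟨fun P _ => ⟨hcont P, hgood P⟩, fun P => RCG.ne_iff_ne_of_good_iff G P hgood⟩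
end
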